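/- arXiv:1708.02216 — 2 statements merged into one kernel-verified Lean document; each statement's English description precedes it below -/
import Mathlib

section
/- Let a = (a_0, ..., a_{n-1}) be a real vector, and let p_0, ..., p_{n-1} ∈ [0,1] with q_k = 1 - p_k. Let ã be the random sequence obtained by sending a through the deletion channel (each a_k is independently retained with probability p_k and deleted with probability q_k, retained entries are concatenated in order), padded with infinitely many zeros on the right. Then for any complex w, E[∑_{j≥0} ã_j w^j] = ∑_{k=0}^{n-1} a_k p_k ∏_{ℓ=0}^{k-1} (p_ℓ w + q_ℓ). -/
open MeasureTheory ProbabilityTheory Finset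


lemma my_integral_mul_complex {Ω : Type*} [MeasureSpace Ω] {X Y : Ω → ℂ}
    (h : IndepFun X Y ℙ) (hX : Integrable X ℙ) (hY : Integrable Y ℙ) :
    ∫ ω, X ω * Y ω ∂ℙ = (∫ ω, X ω ∂ℙ) * ∫ ω, Y ω ∂ℙ := by
  have hXY : Integrable (fun ω => X ω * Y ω) ℙ := h.integrable_mul hX hY
  have hXr : Integrable (fun ω => (X ω).re) ℙ := hX.re
  have hXi : Integrable (fun ω => (X ω).im) ℙ := hX.im
  have hYr : Integrable (fun ω => (Y ω).re) ℙ := hY.re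
  have hYi : Integrable (fun ω => (Y ω).im) ℙ := hY.im
  have irr : IndepFun (fun ω => (X ω).re) (fun ω => (Y ω).re) ℙ :=
    h.comp Complex.measurable_re Complex.measurable_re
  have iri : IndepFun (fun ω => (X ω).re) (fun ω => (Y ω).im) ℙ :=
    h.comp Complex.measurable_re Complex.measurable_im
  have iir : IndepFun (fun ω => (X ω).im) (fun ω => (Y ω).re) ℙ :=
    h.comp Complex.measurable_im Complex.measurable_re
  have iii : IndepFun (fun ω => (X ω).im) (fun ω => (Y ω).im) ℙ :=
    h.comp Complex.measurable_im Complex.measurable_im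
  have e1 : ∫ ω, (X ω).re * (Y ω).re ∂ℙ = (∫ ω, (X ω).re ∂ℙ) * ∫ ω, (Y ω).re ∂ℙ :=
    irr.integral_fun_mul_eq_mul_integral hXr.aestronglyMeasurable hYr.aestronglyMeasurable
  have e2 : ∫ ω, (X ω).re * (Y ω).im ∂ℙ = (∫ ω, (X ω).re ∂ℙ) * ∫ ω, (Y ω).im ∂ℙ :=
    iri.integral_fun_mul_eq_mul_integral hXr.aestronglyMeasurable hYi.aestronglyMeasurable
  have e3 : ∫ ω, (X ω).im * (Y ω).re ∂ℙ = (∫ ω, (X ω).im ∂ℙ) * ∫ ω, (Y ω).re ∂ℙ :=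
    iir.integral_fun_mul_eq_mul_integral hXi.aestronglyMeasurable hYr.aestronglyMeasurable
  have e4 : ∫ ω, (X ω).im * (Y ω).im ∂ℙ = (∫ ω, (X ω).im ∂ℙ) * ∫ ω, (Y ω).im ∂ℙ :=
    iii.integral_fun_mul_eq_mul_integral hXi.aestronglyMeasurable hYi.aestronglyMeasurable
  have i1 : Integrable (fun ω => (X ω).re * (Y ω).re) ℙ := irr.integrable_mul hXr hYr
  have i2 : Integrable (fun ω => (X ω).re * (Y ω).im) ℙ := iri.integrable_mul hXr hYi
  have i3 : Integrable (fun ω => (X ω).im * (Y ω).re) ℙ := iir.integrable_mul hXi hYr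
  have i4 : Integrable (fun ω => (X ω).im * (Y ω).im) ℙ := iii.integrable_mul hXi hYi
  have hre : (∫ ω, X ω * Y ω ∂ℙ).re = ∫ ω, (X ω * Y ω).re ∂ℙ := by
    simpa using (integral_re hXY).symm
  have him : (∫ ω, X ω * Y ω ∂ℙ).im = ∫ ω, (X ω * Y ω).im ∂ℙ := by
    simpa using (integral_im hXY).symm
  have hXre : (∫ ω, X ω ∂ℙ).re = ∫ ω, (X ω).re ∂ℙ := by simpa using (integral_re hX).symm
  have hXim : (∫ ω, X ω ∂ℙ).im = ∫ ω, (X ω).im ∂ℙ := by simpa using (integral_im hX).symm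
  have hYre : (∫ ω, Y ω ∂ℙ).re = ∫ ω, (Y ω).re ∂ℙ := by simpa using (integral_re hY).symm
  have hYim : (∫ ω, Y ω ∂ℙ).im = ∫ ω, (Y ω).im ∂ℙ := by simpa using (integral_im hY).symm
  apply Complex.ext
  · rw [hre, Complex.mul_re, hXre, hXim, hYre, hYim, ← e1, ← e4]
    simp_rw [Complex.mul_re]
    exact integral_sub i1 i4
  · rw [him, Complex.mul_im, hXre, hXim, hYre, hYim, ← e2, ← e3]
    simp_rw [Complex.mul_im]
    exact integral_add i2 i3


lemma my_integral_prod_complex {Ω ι : Type*} [MeasureSpace Ω]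
    [IsProbabilityMeasure (ℙ : Measure Ω)]
    {Y : ι → Ω → ℂ} (hind : iIndepFun Y ℙ)
    (hmeas : ∀ i, Measurable (Y i)) (hint : ∀ i, Integrable (Y i) ℙ)
    (s : Finset ι) :
    Integrable (fun ω => ∏ i ∈ s, Y i ω) ℙ ∧
      ∫ ω, ∏ i ∈ s, Y i ω ∂ℙ = ∏ i ∈ s, ∫ ω, Y i ω ∂ℙ := by
  classical
  induction s using Finset.induction_on with
  | empty => simp
  | insert a s hi ih =>
    have hip : IndepFun (∏ j ∈ s, Y j) (Y a) ℙ :=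
      hind.indepFun_finsetProd_of_notMem hmeas hi
    have hprodfun : (∏ j ∈ s, Y j) = fun ω => ∏ j ∈ s, Y j ω := by
      funext ω; simp
    rw [hprodfun] at hip
    have hintp : Integrable (fun ω => (∏ j ∈ s, Y j ω) * Y a ω) ℙ :=
      hip.integrable_mul ih.1 (hint a)
    have hmul := my_integral_mul_complex hip ih.1 (hint a)
    constructor
    · simpa [Finset.prod_insert hi, mul_comm] using hintp
    · simp_rw [Finset.prod_insert hi]
      calc ∫ ω, Y a ω * ∏ i ∈ s, Y i ω ∂ℙ
          = ∫ ω, (∏ i ∈ s, Y i ω) * Y a ω ∂ℙ := by simp_rw [mul_comm]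
        _ = (∫ ω, ∏ i ∈ s, Y i ω ∂ℙ) * ∫ ω, Y a ω ∂ℙ := hmul
        _ = (∫ ω, Y a ω ∂ℙ) * ∏ i ∈ s, ∫ ω, Y i ω ∂ℙ := by rw [ih.2, mul_comm]


lemma my_ite_int {Ω : Type*} [MeasureSpace Ω] [IsProbabilityMeasure (ℙ : Measure Ω)]
    {P : Ω → Prop} [DecidablePred P] (hs : MeasurableSet {ω | P ω}) (c d : ℂ) :
    Integrable (fun ω => if P ω then c else d) ℙ ∧
      ∫ ω, (if P ω then c else d) ∂ℙ = ((ℙ {ω | P ω}).toReal : ℂ) * (c - d) + d := by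
  have heq : (fun ω => if P ω then c else d)
      = fun ω => Set.indicator {ω | P ω} (fun _ => c - d) ω + d := by
    funext ω
    by_cases h : P ω
    · simp [Set.indicator_of_mem (show ω ∈ {ω | P ω} from h), h]
    · simp [Set.indicator_of_notMem (show ω ∉ {ω | P ω} from h), h]
  have hind : Integrable (fun ω => Set.indicator {ω | P ω} (fun _ => c - d) ω) ℙ :=
    (integrable_const (c - d)).indicator hs
  constructor
  · rw [heq]; exact hind.add (integrable_const d)
  · rw [heq, integral_add hind (integrable_const d), integral_indicator_const _ hs]
    simp [Complex.real_smul, measureReal_def]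

/-- Single-bit statistics of the deletion channel: the expected generating function of the
trace `ã` (with `ã_j = ∑_k a_k · 1{B_k = 1, ∑_{ℓ<k} B_ℓ = j}`) equals
`∑_k a_k p_k ∏_{ℓ<k} (p_ℓ w + q_ℓ)`. -/
theorem deletion_channel_polynomial_identity
    {Ω : Type*} [MeasureSpace Ω] [IsProbabilityMeasure (ℙ : Measure Ω)]
    (n : ℕ) (p : Fin n → ℝ) (hp : ∀ k, p k ∈ Set.Icc (0 : ℝ) 1)
    (a : Fin n → ℝ)
    (B : Fin n → Ω → ℕ)
    (hmeas : ∀ k, Measurable (B k))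
    (hval : ∀ k ω, B k ω ≤ 1)
    (hind : iIndepFun B ℙ)
    (hP : ∀ k, (ℙ {ω | B k ω = 1}).toReal = p k)
    -- the trace, padded with zeros (it vanishes for `j ≥ n`):
    (atil : Ω → ℕ → ℝ)
    (hatil : ∀ ω j, atil ω j =
      ∑ k : Fin n, if B k ω = 1 ∧ (∑ ℓ ∈ Finset.univ.filter (· < k), B ℓ ω) = j
        then a k else 0)
    (hvanish : ∀ ω j, n ≤ j → atil ω j = 0)
    (w : ℂ) :
    ∫ ω, (∑ j ∈ Finset.range n, (atil ω j : ℂ) * w ^ j) ∂ℙ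
      = ∑ k : Fin n, (a k : ℂ) * (p k : ℂ) *
          ∏ ℓ ∈ Finset.univ.filter (· < k), ((p ℓ : ℂ) * w + (1 - (p ℓ : ℂ))) := by
  classical
  set g : Fin n → Fin n → ℕ → ℂ := fun k i m =>
    if i = k then (if m = 1 then 1 else 0) else (if m = 1 then w else 1) with hg
  set F : Fin n → Fin n → Ω → ℂ := fun k i => g k i ∘ B i with hF
  have hBcases : ∀ ℓ ω, B ℓ ω = 0 ∨ B ℓ ω = 1 := fun ℓ ω =>
    Nat.le_one_iff_eq_zero_or_eq_one.mp (hval ℓ ω)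
  have hmeasB1 : ∀ i, MeasurableSet {ω | B i ω = 1} := fun i =>
    (hmeas i) (measurableSet_singleton 1)
  have hknot : ∀ k : Fin n, k ∉ Finset.univ.filter (· < k) := by
    intro k hk
    simp only [Finset.mem_filter] at hk
    exact absurd hk.2 (lt_irrefl k)
  -- pointwise identity
  have key : ∀ ω, ∑ j ∈ Finset.range n, (atil ω j : ℂ) * w ^ j
      = ∑ k : Fin n, (a k : ℂ) *
          ∏ i ∈ insert k (Finset.univ.filter (· < k)), F k i ω := by
    intro ω
    simp_rw [hatil]
    push_cast [apply_ite (fun x : ℝ => (x : ℂ))]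
    simp_rw [Finset.sum_mul, ite_mul, zero_mul]
    rw [Finset.sum_comm]
    refine Finset.sum_congr rfl fun k _ => ?_
    by_cases hB : B k ω = 1
    · have hSlt : (∑ ℓ ∈ Finset.univ.filter (· < k), B ℓ ω) < n := by
        have h1 : (∑ ℓ ∈ Finset.univ.filter (· < k), B ℓ ω)
            ≤ (Finset.univ.filter (· < k)).card := by
          simpa using Finset.sum_le_card_nsmul _ _ 1 (fun ℓ _ => hval ℓ ω)
        have h2 : (Finset.univ.filter (· < k)).card < n := by
          have hss : Finset.univ.filter (· < k) ⊂ (Finset.univ : Finset (Fin n)) := by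
            refine Finset.ssubset_univ_iff.mpr fun h => ?_
            exact hknot k (by rw [h]; exact Finset.mem_univ k)
          simpa using Finset.card_lt_card hss
        omega
      rw [Finset.prod_insert (hknot k)]
      have hFkk : F k k ω = 1 := by simp [hF, hg, hB]
      have hFki : ∀ i ∈ Finset.univ.filter (· < k), F k i ω = w ^ (B i ω) := by
        intro i hi
        have hik : i ≠ k := fun h => hknot k (h ▸ hi)
        rcases hBcases i ω with h0 | h0 <;> simp [hF, hg, hik, h0]
      rw [Finset.prod_congr rfl hFki, Finset.prod_pow_eq_pow_sum, hFkk, one_mul]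
      simp only [hB, true_and]
      rw [Finset.sum_ite_eq (Finset.range n) _ (fun j => (a k : ℂ) * w ^ j)]
      simp [Finset.mem_range, hSlt]
    · rw [Finset.prod_insert (hknot k)]
      have hFkk : F k k ω = 0 := by simp [hF, hg, hB]
      simp [hB, hFkk]
  simp_rw [key]
  -- measurability / independence / integrability of the families
  have hmeasF : ∀ k i, Measurable (F k i) := fun k i =>
    (measurable_of_countable (g k i)).comp (hmeas i)
  have hindF : ∀ k, iIndepFun (F k) ℙ := fun k =>
    hind.comp (g k) (fun i => measurable_of_countable (g k i))
  have hintF : ∀ k i, Integrable (F k i) ℙ := by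
    intro k i
    by_cases hik : i = k
    · have := (my_ite_int (P := fun ω => B i ω = 1) (hmeasB1 i) (1 : ℂ) 0).1
      simpa [hF, hg, hik, Function.comp_def] using this
    · have := (my_ite_int (P := fun ω => B i ω = 1) (hmeasB1 i) w 1).1
      simpa [hF, hg, hik, Function.comp_def] using this
  have hprod : ∀ k : Fin n,
      Integrable (fun ω => ∏ i ∈ insert k (Finset.univ.filter (· < k)), F k i ω) ℙ ∧
      ∫ ω, ∏ i ∈ insert k (Finset.univ.filter (· < k)), F k i ω ∂ℙ
        = ∏ i ∈ insert k (Finset.univ.filter (· < k)), ∫ ω, F k i ω ∂ℙ := fun k =>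
    my_integral_prod_complex (hindF k) (hmeasF k) (hintF k) _
  rw [integral_finset_sum _ (fun k _ => ((hprod k).1.const_mul _))]
  refine Finset.sum_congr rfl fun k _ => ?_
  rw [integral_const_mul, (hprod k).2, Finset.prod_insert (hknot k)]
  have hFk : ∫ ω, F k k ω ∂ℙ = (p k : ℂ) := by
    have := (my_ite_int (P := fun ω => B k ω = 1) (hmeasB1 k) (1 : ℂ) 0).2
    simp only [hF, hg] at *
    simpa [hP k] using this
  have hFi : ∀ i ∈ Finset.univ.filter (· < k),
      ∫ ω, F k i ω ∂ℙ = (p i : ℂ) * w + (1 - (p i : ℂ)) := by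
    intro i hi
    have hik : i ≠ k := fun h => hknot k (h ▸ hi)
    have := (my_ite_int (P := fun ω => B i ω = 1) (hmeasB1 i) w 1).2
    simp only [hF, hg, hik, if_false, Function.comp] at *
    rw [this, hP i]; ring
  rw [hFk, Finset.prod_congr rfl hFi, mul_assoc]
end

section
/- Let D be the open disc of radius 1/2 centered at 1/2 + t for some t ∈ (0, 1/10), write points of ∂D as z = (1/2 + t) + (1/2)e^{iθ} in polar coordinates about the center of D, and let θ_0 ∈ [0, π/2] be the angle corresponding to the intersection point of ∂D and the unit circle in the first quadrant. Then there is a universal constant c > 0 such that for every z = (1/2+t) + (1/2)e^{iθ} with θ ∈ [θ_0, π/2] and |z| ≤ 1, one has 1 - |z| ≥ c^{-1}(θ - θ_0)². -/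
open Real

lemma abs_sq_circle (a θ : ℝ) :
    ‖(a : ℂ) + (1 / 2 : ℂ) * Complex.exp (θ * Complex.I)‖ ^ 2
      = a ^ 2 + a * Real.cos θ + 1 / 4 := by
  rw [Complex.sq_norm, Complex.normSq_apply]
  simp [Complex.exp_mul_I, Complex.cos_ofReal_re, Complex.sin_ofReal_re]
  have h := Real.sin_sq_add_cos_sq θ
  ring_nf
  nlinarith [h]

set_option maxHeartbeats 1000000 in
/-- Quadratic lower bound on `1 - |z|` for points `z = (1/2+t) + (1/2)e^{iθ}` of the circle
`∂B_{1/2}(1/2+t)` lying inside the closed unit disc, in terms of the angular distance to the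
intersection point `θ₀` of the two circles in the first quadrant. -/
theorem quadratic_gap_on_tangent_circle :
    ∃ c > (0 : ℝ), ∀ t ∈ Set.Ioo (0 : ℝ) (1 / 10),
      ∀ θ₀ ∈ Set.Icc (0 : ℝ) (Real.pi / 2),
        ‖(1 / 2 + t : ℂ) + (1 / 2 : ℂ) * Complex.exp (θ₀ * Complex.I)‖ = 1 →
        ∀ θ ∈ Set.Icc θ₀ (Real.pi / 2),
          ‖(1 / 2 + t : ℂ) + (1 / 2 : ℂ) * Complex.exp (θ * Complex.I)‖ ≤ 1 →
          1 - ‖(1 / 2 + t : ℂ) + (1 / 2 : ℂ) * Complex.exp (θ * Complex.I)‖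
            ≥ c⁻¹ * (θ - θ₀) ^ 2 := by
  refine ⟨20, by norm_num, ?_⟩
  intro t ht θ₀ hθ₀ h0 θ hθ hle
  set a : ℝ := 1 / 2 + t with ha
  have hcast : (1 / 2 + t : ℂ) = ((a : ℝ) : ℂ) := by push_cast [ha]; ring
  rw [hcast] at h0 hle ⊢
  have h0' : a ^ 2 + a * Real.cos θ₀ + 1 / 4 = 1 := by
    rw [← abs_sq_circle a θ₀, h0]; norm_num
  set A := ‖(a : ℂ) + (1 / 2 : ℂ) * Complex.exp (θ * Complex.I)‖ with hA
  have hAsq : A ^ 2 = a ^ 2 + a * Real.cos θ + 1 / 4 := abs_sq_circle a θ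
  have hA0 : 0 ≤ A := norm_nonneg _
  clear_value A
  -- 1 - A ≥ (1 - A^2)/2
  have key : 1 - A ^ 2 = a * (Real.cos θ₀ - Real.cos θ) := by
    rw [hAsq]; linarith [h0']
  have hpi : (0:ℝ) < Real.pi := Real.pi_pos
  have hθ01 : 0 ≤ θ₀ := hθ₀.1
  have hθ02 : θ₀ ≤ Real.pi / 2 := hθ₀.2
  have hθ1 : θ₀ ≤ θ := hθ.1
  have hθ2 : θ ≤ Real.pi / 2 := hθ.2
  -- cos θ₀ - cos θ ≥ 2 ((θ-θ₀)/π)^2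
  have hcos : Real.cos θ₀ - Real.cos θ ≥ 2 * ((θ - θ₀) / Real.pi) ^ 2 := by
    have hfs : Real.cos θ₀ - Real.cos θ
        = 2 * Real.sin ((θ + θ₀) / 2) * Real.sin ((θ - θ₀) / 2) := by
      rw [Real.cos_sub_cos, show ((θ₀ - θ)/2) = -((θ - θ₀)/2) by ring, Real.sin_neg,
        show ((θ₀ + θ)/2) = ((θ + θ₀)/2) by ring]; ring
    have hx0 : 0 ≤ (θ - θ₀) / 2 := by linarith
    have hx1 : (θ - θ₀) / 2 ≤ Real.pi / 2 := by linarith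
    have hs1 : 2 / Real.pi * ((θ - θ₀) / 2) ≤ Real.sin ((θ - θ₀) / 2) :=
      Real.mul_le_sin hx0 hx1
    have hs2 : Real.sin ((θ - θ₀) / 2) ≤ Real.sin ((θ + θ₀) / 2) := by
      apply Real.sin_le_sin_of_le_of_le_pi_div_two (by linarith) (by linarith) (by linarith)
    have hs0 : 0 ≤ Real.sin ((θ - θ₀) / 2) := by
      have := Real.sin_nonneg_of_nonneg_of_le_pi hx0 (by linarith)
      exact this
    have h2pi : 0 ≤ 2 / Real.pi * ((θ - θ₀) / 2) := by positivity
    rw [hfs]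
    have : (θ - θ₀) / Real.pi = 2 / Real.pi * ((θ - θ₀) / 2) := by
      field_simp
    rw [this]
    nlinarith [mul_le_mul hs2 hs1 h2pi (Real.sin_nonneg_of_nonneg_of_le_pi (by linarith) (by linarith))]
  have hage : (1:ℝ)/2 ≤ a := by simp [ha]; linarith [ht.1]
  have h1A2 : 1 - A ^ 2 ≥ (θ - θ₀) ^ 2 / Real.pi ^ 2 := by
    rw [key]
    have hnn : 0 ≤ 2 * ((θ - θ₀) / Real.pi) ^ 2 := by positivity
    have h' : (1/2) * (2 * ((θ - θ₀) / Real.pi) ^ 2) ≤ a * (Real.cos θ₀ - Real.cos θ) :=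
      mul_le_mul hage hcos hnn (le_trans (by norm_num) hage)
    have heq : (1/2 : ℝ) * (2 * ((θ - θ₀) / Real.pi) ^ 2) = (θ - θ₀) ^ 2 / Real.pi ^ 2 := by
      rw [div_pow]; ring
    linarith
  have hpi2 : Real.pi ^ 2 ≤ 10 := by nlinarith [Real.pi_lt_d2]
  have hfin : 1 - A ≥ (1 - A ^ 2) / 2 := by nlinarith [sq_nonneg (1 - A)]
  have : (θ - θ₀) ^ 2 / Real.pi ^ 2 / 2 ≥ (20:ℝ)⁻¹ * (θ - θ₀) ^ 2 := by
    rw [ge_iff_le, div_div, inv_mul_eq_div, div_le_div_iff₀ (by norm_num) (by positivity)]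
    exact mul_le_mul_of_nonneg_left (by linarith) (sq_nonneg (θ - θ₀))
  linarith [h1A2]
end
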